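/- Let A be an algebra with a unary operation ¬ satisfying ¬¬a = a for all a ∈ A. For every B ⊆ A, if Fig(B) ≠ A then Fig(B) = B. -/

import Mathlib

/-- Formulas of the algebraic language with a single unary connective ¬,
built as the absolutely free algebra over a countably infinite set of variables. -/
inductive Fm : Type where
  | var : ℕ → Fm
  | neg : Fm → Fm

/-- The {¬}-fragment ⊢_N of classical propositional logic: Γ ⊢_N α iff every
homomorphism h from Fm to the two-element algebra 2_¬ = ⟨{0,1},¬⟩ (¬0 = 1, ¬1 = 0)
with h[Γ] ⊆ {1} satisfies h(α) = 1. -/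
def DerivN (Γ : Set Fm) (α : Fm) : Prop :=
  ∀ h : Fm → Bool, (∀ φ : Fm, h (Fm.neg φ) = !(h φ)) →
    (∀ γ ∈ Γ, h γ = true) → h α = true

/-- F ⊆ A is an S_N-filter of the algebra ⟨A, neg⟩ if for all Γ ∪ {α} ⊆ Fm with
Γ ⊢_N α and every homomorphism h : Fm → A, h[Γ] ⊆ F implies h(α) ∈ F. -/
def IsSNFilter {A : Type*} (neg : A → A) (F : Set A) : Prop :=
  ∀ (Γ : Set Fm) (α : Fm), DerivN Γ α →
    ∀ h : Fm → A, (∀ φ : Fm, h (Fm.neg φ) = neg (h φ)) →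
      (∀ γ ∈ Γ, h γ ∈ F) → h α ∈ F

/-- `Fig neg B` is the least S_N-filter of ⟨A, neg⟩ containing B
(the intersection of all S_N-filters containing B). -/
def Fig {A : Type*} (neg : A → A) (B : Set A) : Set A :=
  {a | ∀ F : Set A, IsSNFilter neg F → B ⊆ F → a ∈ F}

/-!
When ¬ is an involution, the value of a homomorphism `h : Fm → A` at `φ` is `h p` or `¬ h p`,
where `p` is the variable of `φ` and the choice depends on the parity of the negations in `φ`.
A two-valued countermodel then shows that `Γ ⊢_N α` holds only if `Γ` contains `α` up to an even
number of negations, or contains a complementary pair `φ`, `¬φ` up to the same reduction. Hence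
a set `B` with no pair `a, ¬a` is already an S_N-filter, while a set with such a pair generates
all of `A` by explosion.
-/

namespace Fm

/-- The variable of a formula. -/
def core : Fm → ℕ
  | var n => n
  | neg φ => core φ

/-- Whether a formula has an odd number of negations. -/
def par : Fm → Bool
  | var _ => false
  | neg φ => !par φ

def eval {A : Type*} (f : A → A) (v : ℕ → A) : Fm → A
  | var n => v n
  | neg φ => f (eval f v φ)

variable {A : Type*} {f : A → A}

lemma eval_neg (v : ℕ → A) (φ : Fm) : eval f v (neg φ) = f (eval f v φ) := rfl

lemma hom_eq_cond (hf : Function.Involutive f) {h : Fm → A}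
    (hh : ∀ φ, h (neg φ) = f (h φ)) (φ : Fm) :
    h φ = cond φ.par (f (h (var φ.core))) (h (var φ.core)) := by
  induction φ with
  | var n => rfl
  | neg ψ ih => cases hp : ψ.par <;> simp [hh, ih, hp, par, core, hf _]

lemma hom_eq_of_core_eq_of_par_eq (hf : Function.Involutive f) {h : Fm → A}
    (hh : ∀ φ, h (neg φ) = f (h φ)) {φ ψ : Fm} (hc : φ.core = ψ.core) (hp : φ.par = ψ.par) :
    h φ = h ψ := by
  rw [hom_eq_cond hf hh φ, hom_eq_cond hf hh ψ, hc, hp]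

lemma hom_eq_of_core_eq_of_par_ne (hf : Function.Involutive f) {h : Fm → A}
    (hh : ∀ φ, h (neg φ) = f (h φ)) {φ ψ : Fm} (hc : φ.core = ψ.core) (hp : φ.par ≠ ψ.par) :
    h φ = f (h ψ) := by
  rw [hom_eq_cond hf hh φ, hom_eq_cond hf hh ψ, hc]
  cases hψ : ψ.par <;> simp_all [hf _]

end Fm

open Fm

lemma DerivN.exists_same_or_exists_complementary {Γ : Set Fm} {α : Fm} (hd : DerivN Γ α) :
    (∃ γ ∈ Γ, γ.core = α.core ∧ γ.par = α.par) ∨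
      ∃ γ ∈ Γ, ∃ γ' ∈ Γ, γ.core = γ'.core ∧ γ.par ≠ γ'.par := by
  classical
  by_contra! hc
  obtain ⟨hα, hΓ⟩ := hc
  -- Make every premise true, and `α` false, which requires flipping the variable of `α` to
  -- `true` when `α` has odd parity.
  let v : ℕ → Bool := fun n =>
    decide ((∃ γ ∈ Γ, γ.core = n ∧ γ.par = false) ∨ (n = α.core ∧ α.par = true))
  have hv : ∀ φ, eval (!·) v φ = xor φ.par (v φ.core) := fun φ => by
    rw [hom_eq_cond Bool.not_not (eval_neg v) φ]
    cases φ.par <;> simp [eval]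
  have hprem : ∀ γ ∈ Γ, eval (!·) v γ = true := by
    intro γ hγ
    have hvγ : v γ.core = !γ.par := by
      cases hp : γ.par
      · exact decide_eq_true (Or.inl ⟨γ, hγ, rfl, hp⟩)
      · refine decide_eq_false ?_
        rintro (⟨γ', hγ', hc, hp'⟩ | ⟨hc, hpα⟩)
        · simp [hΓ γ' hγ' γ hγ hc, hp] at hp'
        · exact hα γ hγ hc (hp.trans hpα.symm)
    rw [hv, hvγ]
    cases γ.par <;> rfl
  have hvα : v α.core = α.par := by
    cases hp : α.par
    · refine decide_eq_false ?_
      rintro (⟨γ, hγ, hc, hpγ⟩ | ⟨-, hpα⟩)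
      · exact hα γ hγ hc (hpγ.trans hp.symm)
      · simp [hp] at hpα
    · exact decide_eq_true (Or.inr ⟨rfl, hp⟩)
  have := hd _ (eval_neg v) hprem
  rw [hv, hvα] at this
  simp at this

lemma derivN_explosion (α : Fm) : DerivN {var 0, neg (var 0)} α := by
  intro h hh hΓ
  have h0 : h (var 0) = true := hΓ _ (Or.inl rfl)
  have h1 : h (neg (var 0)) = true := hΓ _ (Or.inr rfl)
  simp [hh, h0] at h1

section Fig

variable {A : Type*} {neg : A → A} {B : Set A}

lemma subset_fig : B ⊆ Fig neg B := fun _ hb _ _ hBF => hBF hb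

lemma fig_subset_of_isSNFilter {F : Set A} (hF : IsSNFilter neg F) (hBF : B ⊆ F) :
    Fig neg B ⊆ F := fun _ ha => ha F hF hBF

lemma fig_eq_univ_of_mem_of_neg_mem {a : A} (ha : a ∈ B) (hna : neg a ∈ B) :
    Fig neg B = Set.univ := by
  refine Set.eq_univ_of_forall fun x F hF hBF => ?_
  let h := eval neg fun n => if n = 0 then a else x
  have hprem : ∀ γ ∈ ({var 0, Fm.neg (var 0)} : Set Fm), h γ ∈ F := by
    rintro γ (rfl | rfl)
    · exact hBF ha
    · exact hBF hna
  exact hF _ (var 1) (derivN_explosion _) h (eval_neg _) hprem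

lemma isSNFilter_of_involutive (hneg : Function.Involutive neg) {F : Set A}
    (hF : ∀ a ∈ F, neg a ∉ F) : IsSNFilter neg F := by
  intro Γ α hd h hh hΓ
  rcases hd.exists_same_or_exists_complementary with
    ⟨γ, hγ, hc, hp⟩ | ⟨γ, hγ, γ', hγ', hc, hp⟩
  · rw [← hom_eq_of_core_eq_of_par_eq hneg hh hc hp]
    exact hΓ γ hγ
  · refine absurd ?_ (hF _ (hΓ γ' hγ'))
    rw [← hom_eq_of_core_eq_of_par_ne hneg hh hc hp]
    exact hΓ γ hγ

end Fig

/-- If the algebra satisfies ¬¬a = a, then every proper generated S_N-filter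
Fig(B) ≠ A equals B itself. -/
theorem stmt17 {A : Type*} (neg : A → A) (hinv : ∀ a : A, neg (neg a) = a)
    (B : Set A) (hne : Fig neg B ≠ Set.univ) : Fig neg B = B := by
  have hB : IsSNFilter neg B :=
    isSNFilter_of_involutive hinv fun _ ha hna => hne (fig_eq_univ_of_mem_of_neg_mem ha hna)
  exact (fig_subset_of_isSNFilter hB subset_rfl).antisymm subset_fig
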